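/- arXiv:1403.5327 — 2 statements merged into one kernel-verified Lean document; each statement's English description precedes it below -/
import Mathlib

section
/- For every n ≥ 2, the number of standard Young tableaux of shape (n, n-1, 1) equals ((n-1)(n+1)/(2n+1)) · C_{n+1}, where C_{n+1} is the (n+1)-st Catalan number. -/
open Finset

/-- Cells of the Young diagram with row lengths given by the list `ρ`. -/
def diagCells (ρ : List ℕ) : Finset (ℕ × ℕ) :=
  (Finset.range ρ.length).biUnion (fun i => {i} ×ˢ Finset.range (ρ.getD i 0))

/-- Number of standard Young tableaux of the diagram with row lengths `ρ`:
bijective fillings with `1, …, n` increasing along rows and columns. -/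
noncomputable def sytCount (ρ : List ℕ) : ℕ :=
  Nat.card {T : diagCells ρ → Fin (diagCells ρ).card //
    Function.Bijective T ∧
    (∀ a b : diagCells ρ, (a : ℕ × ℕ).1 = (b : ℕ × ℕ).1 → (a : ℕ × ℕ).2 < (b : ℕ × ℕ).2 → T a < T b) ∧
    (∀ a b : diagCells ρ, (a : ℕ × ℕ).2 = (b : ℕ × ℕ).2 → (a : ℕ × ℕ).1 < (b : ℕ × ℕ).1 → T a < T b)}

/-! ### Auxiliary definitions and lemmas -/

abbrev sytSet (s : Finset (ℕ × ℕ)) : Type :=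
  {T : s → Fin s.card //
    Function.Bijective T ∧
    (∀ a b : s, (a : ℕ × ℕ).1 = (b : ℕ × ℕ).1 → (a : ℕ × ℕ).2 < (b : ℕ × ℕ).2 → T a < T b) ∧
    (∀ a b : s, (a : ℕ × ℕ).2 = (b : ℕ × ℕ).2 → (a : ℕ × ℕ).1 < (b : ℕ × ℕ).1 → T a < T b)}

lemma sytCount_eq (ρ : List ℕ) : sytCount ρ = Nat.card (sytSet (diagCells ρ)) := rfl

lemma sytCount_congr {ρ ρ' : List ℕ} (h : diagCells ρ = diagCells ρ') :
    sytCount ρ = sytCount ρ' := by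
  rw [sytCount_eq, sytCount_eq, h]

def IsLS (s : Finset (ℕ × ℕ)) : Prop :=
  ∀ p ∈ s, ∀ q : ℕ × ℕ, q.1 ≤ p.1 → q.2 ≤ p.2 → q ∈ s

def maxCells (s : Finset (ℕ × ℕ)) : Finset (ℕ × ℕ) :=
  s.filter (fun c => (c.1 + 1, c.2) ∉ s ∧ (c.1, c.2 + 1) ∉ s)


lemma card_fiber (s : Finset (ℕ × ℕ)) (hlow : IsLS s) (c : ℕ × ℕ) (hc : c ∈ maxCells s)
    (hcs : c ∈ s) (hN : 0 < s.card) :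
    Nat.card {T : sytSet s // T.1 ⟨c, hcs⟩ = ⟨s.card - 1, by omega⟩}
      = Nat.card (sytSet (s.erase c)) := by
  classical
  have hE : (s.erase c).card = s.card - 1 := Finset.card_erase_of_mem hcs
  have hc1 : (c.1 + 1, c.2) ∉ s := (Finset.mem_filter.1 hc).2.1
  have hc2 : (c.1, c.2 + 1) ∉ s := (Finset.mem_filter.1 hc).2.2
  have hrowmax : ∀ p ∈ s, p.1 = c.1 → p.2 ≤ c.2 := by
    intro p hp h1
    by_contra h
    push_neg at h
    exact hc2 (hlow p hp (c.1, c.2 + 1) (by omega) (by omega))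
  have hcolmax : ∀ p ∈ s, p.2 = c.2 → p.1 ≤ c.1 := by
    intro p hp h1
    by_contra h
    push_neg at h
    exact hc1 (hlow p hp (c.1 + 1, c.2) (by omega) (by omega))
  apply Nat.card_congr
  refine Equiv.ofBijective
    (fun P => ⟨fun x => ⟨(P.1.1 ⟨x.1, Finset.mem_of_mem_erase x.2⟩).1, ?_⟩, ?_, ?_, ?_⟩)
    ⟨?_, ?_⟩
  · -- bound
    rw [hE]
    have h1 := (P.1.1 ⟨x.1, Finset.mem_of_mem_erase x.2⟩).2
    have hne : (P.1.1 ⟨x.1, Finset.mem_of_mem_erase x.2⟩).1 ≠ s.card - 1 := by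
      intro h
      have : P.1.1 ⟨x.1, Finset.mem_of_mem_erase x.2⟩ = P.1.1 ⟨c, hcs⟩ := by
        rw [P.2]; exact Fin.ext h
      have := P.1.2.1.1 this
      exact (Finset.mem_erase.1 x.2).1 (congrArg Subtype.val this)
    omega
  · -- bijective of restriction
    rw [Fintype.bijective_iff_injective_and_card]
    constructor
    · intro x y h
      dsimp only at h
      have h2 : P.1.1 ⟨x.1, Finset.mem_of_mem_erase x.2⟩ = P.1.1 ⟨y.1, Finset.mem_of_mem_erase y.2⟩ :=
        Fin.ext (Fin.mk_eq_mk.1 h)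
      have h3 := P.1.2.1.1 h2
      exact Subtype.ext (Subtype.mk_eq_mk.1 h3)
    · simp
  · -- row condition
    intro a b h1 h2
    exact P.1.2.2.1 ⟨a.1, Finset.mem_of_mem_erase a.2⟩ ⟨b.1, Finset.mem_of_mem_erase b.2⟩ h1 h2
  · -- col condition
    intro a b h1 h2
    exact P.1.2.2.2 ⟨a.1, Finset.mem_of_mem_erase a.2⟩ ⟨b.1, Finset.mem_of_mem_erase b.2⟩ h1 h2
  · -- injectivity of F
    intro P Q h
    apply Subtype.ext
    apply Subtype.ext
    funext a
    by_cases ha : (a : ℕ × ℕ) = c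
    · have ha' : a = (⟨c, hcs⟩ : {x // x ∈ s}) := Subtype.ext ha
      rw [ha', P.2, Q.2]
    · have hmem : (a : ℕ × ℕ) ∈ s.erase c := Finset.mem_erase.2 ⟨ha, a.2⟩
      dsimp only at h
      have h1 := Subtype.mk_eq_mk.1 h
      have h2 := congrFun h1 ⟨a.1, hmem⟩
      dsimp only at h2
      exact Fin.ext (Fin.mk_eq_mk.1 h2)
  · -- surjectivity of F
    rintro ⟨T', hbij', hrow', hcol'⟩
    refine ⟨⟨⟨fun a => if h : (a : ℕ × ℕ) = c then ⟨s.card - 1, by omega⟩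
        else ⟨(T' ⟨a.1, Finset.mem_erase.2 ⟨h, a.2⟩⟩).1, by
          have := (T' ⟨a.1, Finset.mem_erase.2 ⟨h, a.2⟩⟩).2
          omega⟩, ?_, ?_, ?_⟩, ?_⟩, ?_⟩
    · -- bijective of extension
      rw [Fintype.bijective_iff_injective_and_card]
      constructor
      · intro a b h
        dsimp only at h
        by_cases ha : (a : ℕ × ℕ) = c <;> by_cases hb : (b : ℕ × ℕ) = c
        · exact Subtype.ext (ha.trans hb.symm)
        · exfalso
          rw [dif_pos ha, dif_neg hb] at h
          have := (T' ⟨b.1, Finset.mem_erase.2 ⟨hb, b.2⟩⟩).2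
          have hv := congrArg Fin.val h
          simp only at hv
          omega
        · exfalso
          rw [dif_neg ha, dif_pos hb] at h
          have := (T' ⟨a.1, Finset.mem_erase.2 ⟨ha, a.2⟩⟩).2
          have hv := congrArg Fin.val h
          simp only at hv
          omega
        · rw [dif_neg ha, dif_neg hb] at h
          have h2 : T' ⟨a.1, Finset.mem_erase.2 ⟨ha, a.2⟩⟩ = T' ⟨b.1, Finset.mem_erase.2 ⟨hb, b.2⟩⟩ :=
            Fin.ext (Fin.mk_eq_mk.1 h)
          have h3 := hbij'.1 h2
          exact Subtype.ext (Subtype.mk_eq_mk.1 h3)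
      · simp
    · -- row condition of extension
      intro a b h1 h2
      dsimp only
      by_cases hb : (b : ℕ × ℕ) = c
      · have ha : ¬ (a : ℕ × ℕ) = c := by
          intro ha
          rw [ha, hb] at h2
          exact lt_irrefl _ h2
        rw [dif_pos hb, dif_neg ha]
        have := (T' ⟨a.1, Finset.mem_erase.2 ⟨ha, a.2⟩⟩).2
        exact Fin.mk_lt_mk.2 (by omega)
      · by_cases ha : (a : ℕ × ℕ) = c
        · exfalso
          have := hrowmax b b.2 (by rw [← h1, ha])
          rw [ha] at h2
          omega
        · rw [dif_neg ha, dif_neg hb]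
          exact Fin.mk_lt_mk.2
            (hrow' ⟨a.1, Finset.mem_erase.2 ⟨ha, a.2⟩⟩ ⟨b.1, Finset.mem_erase.2 ⟨hb, b.2⟩⟩ h1 h2)
    · -- col condition of extension
      intro a b h1 h2
      dsimp only
      by_cases hb : (b : ℕ × ℕ) = c
      · have ha : ¬ (a : ℕ × ℕ) = c := by
          intro ha
          rw [ha, hb] at h2
          exact lt_irrefl _ h2
        rw [dif_pos hb, dif_neg ha]
        have := (T' ⟨a.1, Finset.mem_erase.2 ⟨ha, a.2⟩⟩).2
        exact Fin.mk_lt_mk.2 (by omega)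
      · by_cases ha : (a : ℕ × ℕ) = c
        · exfalso
          have := hcolmax b b.2 (by rw [← h1, ha])
          rw [ha] at h2
          omega
        · rw [dif_neg ha, dif_neg hb]
          exact Fin.mk_lt_mk.2
            (hcol' ⟨a.1, Finset.mem_erase.2 ⟨ha, a.2⟩⟩ ⟨b.1, Finset.mem_erase.2 ⟨hb, b.2⟩⟩ h1 h2)
    · -- fiber condition
      simp
    · -- F of extension = T'
      apply Subtype.ext
      funext x
      apply Fin.ext
      have hx : ¬ (x : ℕ × ℕ) = c := (Finset.mem_erase.1 x.2).1
      simp only [dif_neg hx]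

lemma card_sytSet_del (s : Finset (ℕ × ℕ)) (hlow : IsLS s) (hne : s.Nonempty) :
    Nat.card (sytSet s) = ∑ c ∈ maxCells s, Nat.card (sytSet (s.erase c)) := by
  classical
  have hN : 0 < s.card := Finset.card_pos.2 hne
  have fmem : ∀ T : sytSet s,
      ((Equiv.ofBijective T.1 T.2.1).symm ⟨s.card - 1, by omega⟩ : {x // x ∈ s}).1 ∈ maxCells s := by
    intro T
    set e := Equiv.ofBijective T.1 T.2.1 with he
    set c0 := e.symm ⟨s.card - 1, by omega⟩ with hc0
    have hTc : T.1 c0 = ⟨s.card - 1, by omega⟩ := e.apply_symm_apply _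
    refine Finset.mem_filter.2 ⟨c0.2, ?_, ?_⟩
    · intro h
      have hlt := T.2.2.2 c0 ⟨((c0 : ℕ × ℕ).1 + 1, (c0 : ℕ × ℕ).2), h⟩ rfl (Nat.lt_succ_self _)
      rw [hTc] at hlt
      have := (T.1 ⟨((c0 : ℕ × ℕ).1 + 1, (c0 : ℕ × ℕ).2), h⟩).2
      have hv : (s.card - 1 : ℕ) < (T.1 ⟨((c0 : ℕ × ℕ).1 + 1, (c0 : ℕ × ℕ).2), h⟩).1 := hlt
      omega
    · intro h
      have hlt := T.2.2.1 c0 ⟨((c0 : ℕ × ℕ).1, (c0 : ℕ × ℕ).2 + 1), h⟩ rfl (Nat.lt_succ_self _)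
      rw [hTc] at hlt
      have := (T.1 ⟨((c0 : ℕ × ℕ).1, (c0 : ℕ × ℕ).2 + 1), h⟩).2
      have hv : (s.card - 1 : ℕ) < (T.1 ⟨((c0 : ℕ × ℕ).1, (c0 : ℕ × ℕ).2 + 1), h⟩).1 := hlt
      omega
  set f : sytSet s → {x // x ∈ maxCells s} := fun T =>
    ⟨((Equiv.ofBijective T.1 T.2.1).symm ⟨s.card - 1, by omega⟩ : {x // x ∈ s}).1, fmem T⟩ with hf
  letI : Fintype (sytSet s) := Fintype.ofFinite _
  letI : ∀ c : {x // x ∈ maxCells s}, Fintype {T : sytSet s // f T = c} :=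
    fun c => Fintype.ofFinite _
  have key : ∀ c (hc : c ∈ maxCells s),
      Nat.card {T : sytSet s // f T = ⟨c, hc⟩} = Nat.card (sytSet (s.erase c)) := by
    intro c hc
    have hcs : c ∈ s := (Finset.mem_filter.1 hc).1
    rw [← card_fiber s hlow c hc hcs hN]
    apply Nat.card_congr
    apply Equiv.subtypeEquivRight
    intro T
    constructor
    · intro h
      rw [hf] at h
      dsimp only at h
      have h1 := Subtype.mk_eq_mk.1 h
      have h2 : (Equiv.ofBijective T.1 T.2.1).symm ⟨s.card - 1, by omega⟩ = ⟨c, hcs⟩ :=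
        Subtype.ext h1
      have h3 := (Equiv.symm_apply_eq _).1 h2
      exact h3.symm
    · intro h
      rw [hf]
      apply Subtype.ext
      dsimp only
      have h2 : (Equiv.ofBijective T.1 T.2.1).symm ⟨s.card - 1, by omega⟩ = ⟨c, hcs⟩ :=
        (Equiv.symm_apply_eq _).2 h.symm
      exact congrArg Subtype.val h2
  calc Nat.card (sytSet s)
      = Nat.card (Σ c : {x // x ∈ maxCells s}, {T : sytSet s // f T = c}) :=
        (Nat.card_congr (Equiv.sigmaFiberEquiv f)).symm
    _ = ∑ c : {x // x ∈ maxCells s}, Nat.card {T : sytSet s // f T = c} := by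
        rw [Nat.card_eq_fintype_card, Fintype.card_sigma]
        exact Finset.sum_congr rfl fun c _ => (Nat.card_eq_fintype_card).symm
    _ = ∑ c : {x // x ∈ maxCells s}, Nat.card (sytSet (s.erase c.1)) := by
        apply Finset.sum_congr rfl
        intro c _
        exact key c.1 c.2
    _ = ∑ c ∈ maxCells s, Nat.card (sytSet (s.erase c)) := Finset.sum_coe_sort (maxCells s) (fun c => Nat.card (sytSet (s.erase c)))

lemma mem_diagCells (ρ : List ℕ) (p : ℕ × ℕ) :
    p ∈ diagCells ρ ↔ p.1 < ρ.length ∧ p.2 < ρ.getD p.1 0 := by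
  rcases p with ⟨i, j⟩
  simp only [diagCells, Finset.mem_biUnion, Finset.mem_range, Finset.mem_product,
    Finset.mem_singleton]
  constructor
  · rintro ⟨k, hk, h1, h2⟩
    subst h1
    exact ⟨hk, h2⟩
  · rintro ⟨h1, h2⟩
    exact ⟨i, h1, rfl, h2⟩

lemma mem2 (a b : ℕ) (p : ℕ × ℕ) :
    p ∈ diagCells [a, b] ↔ (p.1 = 0 ∧ p.2 < a) ∨ (p.1 = 1 ∧ p.2 < b) := by
  rw [mem_diagCells]
  rcases p with ⟨i, j⟩
  rcases i with _ | _ | i <;> simp [List.getD]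

lemma mem3 (a b c : ℕ) (p : ℕ × ℕ) :
    p ∈ diagCells [a, b, c] ↔
      (p.1 = 0 ∧ p.2 < a) ∨ (p.1 = 1 ∧ p.2 < b) ∨ (p.1 = 2 ∧ p.2 < c) := by
  rw [mem_diagCells]
  rcases p with ⟨i, j⟩
  rcases i with _ | _ | _ | i <;> simp [List.getD]

lemma isLS2 (a b : ℕ) (h : b ≤ a) : IsLS (diagCells [a, b]) := by
  rintro ⟨i, j⟩ hp ⟨k, l⟩ h1 h2
  rw [mem2] at hp ⊢
  simp only at h1 h2 ⊢
  omega

lemma isLS3 (a b c : ℕ) (h1 : b ≤ a) (h2 : c ≤ b) : IsLS (diagCells [a, b, c]) := by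
  rintro ⟨i, j⟩ hp ⟨k, l⟩ hq1 hq2
  rw [mem3] at hp ⊢
  simp only at hq1 hq2 ⊢
  omega


lemma empty_count : Nat.card (sytSet (∅ : Finset (ℕ × ℕ))) = 1 := by
  rw [Nat.card_eq_one_iff_unique]
  constructor
  · constructor
    rintro T1 T2
    apply Subtype.ext
    funext x
    exact absurd x.2 (Finset.notMem_empty _)
  · refine ⟨⟨fun x => absurd x.2 (Finset.notMem_empty _), ⟨?_, ?_⟩, ?_, ?_⟩⟩
    · intro x
      exact absurd x.2 (Finset.notMem_empty _)
    · intro y2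
      have := y2.2
      simp at this
    · intro x
      exact absurd x.2 (Finset.notMem_empty _)
    · intro x
      exact absurd x.2 (Finset.notMem_empty _)

lemma L1 : sytCount [0, 0] = 1 := by
  have h : diagCells [0, 0] = ∅ := by
    ext ⟨i, j⟩
    simp [mem2]
  rw [sytCount_eq, h, empty_count]

lemma L2 (a : ℕ) : sytCount [a + 1, 0] = sytCount [a, 0] := by
  have hmax : maxCells (diagCells [a + 1, 0]) = {(0, a)} := by
    ext ⟨i, j⟩
    simp only [maxCells, Finset.mem_filter, mem2, Finset.mem_singleton, Prod.mk.injEq]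
    omega
  have he1 : (diagCells [a + 1, 0]).erase (0, a) = diagCells [a, 0] := by
    ext ⟨i, j⟩
    simp only [Finset.mem_erase, mem2, Prod.mk.injEq, ne_eq]
    omega
  rw [sytCount_eq, card_sytSet_del _ (isLS2 _ _ (by omega)) ⟨(0, 0), by simp [mem2]⟩,
    hmax, Finset.sum_singleton, he1, ← sytCount_eq]

lemma L3 (a : ℕ) : sytCount [a + 1, a + 1] = sytCount [a + 1, a] := by
  have hmax : maxCells (diagCells [a + 1, a + 1]) = {(1, a)} := by
    ext ⟨i, j⟩
    simp only [maxCells, Finset.mem_filter, mem2, Finset.mem_singleton, Prod.mk.injEq]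
    omega
  have he1 : (diagCells [a + 1, a + 1]).erase (1, a) = diagCells [a + 1, a] := by
    ext ⟨i, j⟩
    simp only [Finset.mem_erase, mem2, Prod.mk.injEq, ne_eq]
    omega
  rw [sytCount_eq, card_sytSet_del _ (isLS2 _ _ (by omega)) ⟨(0, 0), by simp [mem2]⟩,
    hmax, Finset.sum_singleton, he1, ← sytCount_eq]

lemma L4 (a b : ℕ) (h : b < a) :
    sytCount [a + 1, b + 1] = sytCount [a, b + 1] + sytCount [a + 1, b] := by
  have hmax : maxCells (diagCells [a + 1, b + 1]) = {(0, a), (1, b)} := by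
    ext ⟨i, j⟩
    simp only [maxCells, Finset.mem_filter, mem2, Finset.mem_insert, Finset.mem_singleton,
      Prod.mk.injEq]
    omega
  have he1 : (diagCells [a + 1, b + 1]).erase (0, a) = diagCells [a, b + 1] := by
    ext ⟨i, j⟩
    simp only [Finset.mem_erase, mem2, Prod.mk.injEq, ne_eq]
    omega
  have he2 : (diagCells [a + 1, b + 1]).erase (1, b) = diagCells [a + 1, b] := by
    ext ⟨i, j⟩
    simp only [Finset.mem_erase, mem2, Prod.mk.injEq, ne_eq]
    omega
  rw [sytCount_eq, card_sytSet_del _ (isLS2 _ _ (by omega)) ⟨(0, 0), by simp [mem2]⟩,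
    hmax, Finset.sum_insert (by simp), Finset.sum_singleton, he1, he2, ← sytCount_eq,
    ← sytCount_eq]

lemma L5 (a b : ℕ) : sytCount [a, b, 0] = sytCount [a, b] := by
  apply sytCount_congr
  ext ⟨i, j⟩
  rw [mem3, mem2]
  omega

lemma L6 : sytCount [1, 1, 1] = sytCount [1, 1, 0] := by
  have hmax : maxCells (diagCells [1, 1, 1]) = {(2, 0)} := by
    ext ⟨i, j⟩
    simp only [maxCells, Finset.mem_filter, mem3, Finset.mem_singleton, Prod.mk.injEq]
    omega
  have he1 : (diagCells [1, 1, 1]).erase (2, 0) = diagCells [1, 1, 0] := by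
    ext ⟨i, j⟩
    simp only [Finset.mem_erase, mem3, Prod.mk.injEq, ne_eq]
    omega
  rw [sytCount_eq, card_sytSet_del _ (isLS3 _ _ _ le_rfl le_rfl) ⟨(0, 0), by simp [mem3]⟩,
    hmax, Finset.sum_singleton, he1, ← sytCount_eq]

lemma L7 (a : ℕ) : sytCount [a + 2, 1, 1] = sytCount [a + 1, 1, 1] + sytCount [a + 2, 1, 0] := by
  have hmax : maxCells (diagCells [a + 2, 1, 1]) = {(0, a + 1), (2, 0)} := by
    ext ⟨i, j⟩
    simp only [maxCells, Finset.mem_filter, mem3, Finset.mem_insert, Finset.mem_singleton,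
      Prod.mk.injEq]
    omega
  have he1 : (diagCells [a + 2, 1, 1]).erase (0, a + 1) = diagCells [a + 1, 1, 1] := by
    ext ⟨i, j⟩
    simp only [Finset.mem_erase, mem3, Prod.mk.injEq, ne_eq]
    omega
  have he2 : (diagCells [a + 2, 1, 1]).erase (2, 0) = diagCells [a + 2, 1, 0] := by
    ext ⟨i, j⟩
    simp only [Finset.mem_erase, mem3, Prod.mk.injEq, ne_eq]
    omega
  rw [sytCount_eq, card_sytSet_del _ (isLS3 _ _ _ (by omega) le_rfl) ⟨(0, 0), by simp [mem3]⟩,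
    hmax, Finset.sum_insert (by simp), Finset.sum_singleton, he1, he2, ← sytCount_eq,
    ← sytCount_eq]

lemma L8 (b : ℕ) :
    sytCount [b + 2, b + 2, 1] = sytCount [b + 2, b + 1, 1] + sytCount [b + 2, b + 2, 0] := by
  have hmax : maxCells (diagCells [b + 2, b + 2, 1]) = {(1, b + 1), (2, 0)} := by
    ext ⟨i, j⟩
    simp only [maxCells, Finset.mem_filter, mem3, Finset.mem_insert, Finset.mem_singleton,
      Prod.mk.injEq]
    omega
  have he1 : (diagCells [b + 2, b + 2, 1]).erase (1, b + 1) = diagCells [b + 2, b + 1, 1] := by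
    ext ⟨i, j⟩
    simp only [Finset.mem_erase, mem3, Prod.mk.injEq, ne_eq]
    omega
  have he2 : (diagCells [b + 2, b + 2, 1]).erase (2, 0) = diagCells [b + 2, b + 2, 0] := by
    ext ⟨i, j⟩
    simp only [Finset.mem_erase, mem3, Prod.mk.injEq, ne_eq]
    omega
  rw [sytCount_eq, card_sytSet_del _ (isLS3 _ _ _ le_rfl (by omega)) ⟨(0, 0), by simp [mem3]⟩,
    hmax, Finset.sum_insert (by simp), Finset.sum_singleton, he1, he2, ← sytCount_eq,
    ← sytCount_eq]

lemma L9 (a b : ℕ) (h : b + 2 < a + 1) :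
    sytCount [a + 1, b + 2, 1]
      = sytCount [a, b + 2, 1] + sytCount [a + 1, b + 1, 1] + sytCount [a + 1, b + 2, 0] := by
  have hmax : maxCells (diagCells [a + 1, b + 2, 1]) = {(0, a), (1, b + 1), (2, 0)} := by
    ext ⟨i, j⟩
    simp only [maxCells, Finset.mem_filter, mem3, Finset.mem_insert, Finset.mem_singleton,
      Prod.mk.injEq]
    omega
  have he1 : (diagCells [a + 1, b + 2, 1]).erase (0, a) = diagCells [a, b + 2, 1] := by
    ext ⟨i, j⟩
    simp only [Finset.mem_erase, mem3, Prod.mk.injEq, ne_eq]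
    omega
  have he2 : (diagCells [a + 1, b + 2, 1]).erase (1, b + 1) = diagCells [a + 1, b + 1, 1] := by
    ext ⟨i, j⟩
    simp only [Finset.mem_erase, mem3, Prod.mk.injEq, ne_eq]
    omega
  have he3 : (diagCells [a + 1, b + 2, 1]).erase (2, 0) = diagCells [a + 1, b + 2, 0] := by
    ext ⟨i, j⟩
    simp only [Finset.mem_erase, mem3, Prod.mk.injEq, ne_eq]
    omega
  rw [sytCount_eq, card_sytSet_del _ (isLS3 _ _ _ (by omega) (by omega)) ⟨(0, 0), by simp [mem3]⟩,
    hmax, Finset.sum_insert (by simp), Finset.sum_insert (by simp), Finset.sum_singleton,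
    he1, he2, he3, ← sytCount_eq, ← sytCount_eq, ← sytCount_eq, Nat.add_assoc]

lemma factStep (n m : ℕ) (h : n = m + 1) : (n.factorial : ℚ) = ((m : ℚ) + 1) * m.factorial := by
  subst h
  rw [Nat.factorial_succ]
  push_cast
  ring

lemma G0 (a : ℕ) : sytCount [a, 0] = 1 := by
  induction a with
  | zero => exact L1
  | succ a ih => rw [L2]; exact ih

lemma G (a b : ℕ) (hba : b ≤ a) :
    (sytCount [a, b] : ℚ) * (b.factorial * (a + 1).factorial)
      = ((a : ℚ) - b + 1) * (a + b).factorial := by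
  have H : ∀ m a b, b ≤ a → a + b ≤ m →
      (sytCount [a, b] : ℚ) * (b.factorial * (a + 1).factorial)
        = ((a : ℚ) - b + 1) * (a + b).factorial := by
    intro m
    induction m with
    | zero =>
      intro a b hba hm
      obtain rfl : a = 0 := by omega
      obtain rfl : b = 0 := by omega
      rw [L1]
      simp [Nat.factorial]
    | succ m ih =>
      intro a b hba hm
      rcases b with _ | b'
      · rw [G0]
        simp only [Nat.add_zero, Nat.factorial_zero]
        rw [factStep (a + 1) a rfl]
        push_cast
        ring
      · rcases Nat.eq_or_lt_of_le hba with heq | hlt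
        · -- a = b'+1
          subst heq
          rw [L3]
          have ih1 := ih (b' + 1) b' (by omega) (by omega)
          rw [factStep (b' + 1 + b') (2 * b') (by ring), factStep (b' + 1 + 1) (b' + 1) rfl,
            factStep (b' + 1) b' rfl] at ih1
          rw [factStep (b' + 1 + (b' + 1)) (2 * b' + 1) (by ring),
            factStep (2 * b' + 1) (2 * b') (by ring), factStep (b' + 1 + 1) (b' + 1) rfl,
            factStep (b' + 1) b' rfl]
          push_cast at ih1 ⊢
          linear_combination ((b' : ℚ) + 1) * ih1
        · -- b' + 1 < a
          obtain ⟨a', rfl⟩ : ∃ a', a = a' + 1 := ⟨a - 1, by omega⟩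
          rw [L4 a' b' (by omega)]
          have ih1 := ih a' (b' + 1) (by omega) (by omega)
          have ih2 := ih (a' + 1) b' (by omega) (by omega)
          rw [factStep (a' + (b' + 1)) (a' + b') (by ring), factStep (a' + 1) a' rfl,
            factStep (b' + 1) b' rfl] at ih1
          rw [factStep (a' + 1 + b') (a' + b') (by ring), factStep (a' + 1 + 1) (a' + 1) rfl,
            factStep (a' + 1) a' rfl] at ih2
          rw [factStep (a' + 1 + (b' + 1)) (a' + b' + 1) (by ring),
            factStep (a' + b' + 1) (a' + b') (by ring), factStep (a' + 1 + 1) (a' + 1) rfl,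
            factStep (a' + 1) a' rfl, factStep (b' + 1) b' rfl]
          push_cast at ih1 ih2 ⊢
          linear_combination ((a' : ℚ) + 2) * ih1 + ((b' : ℚ) + 1) * ih2
  exact H (a + b) a b hba le_rfl

lemma idxEq (n m : ℕ) (h : n = m) : (n.factorial : ℚ) = m.factorial := by rw [h]

lemma Hf (a b : ℕ) (hba : b + 1 ≤ a) :
    (sytCount [a, b + 1, 1] : ℚ)
        * (((a : ℚ) + 2) * ((b : ℚ) + 2) * a.factorial * b.factorial)
      = ((a : ℚ) - b) * (a + b + 2).factorial := by
  have H : ∀ m a b, b + 1 ≤ a → a + b ≤ m →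
      (sytCount [a, b + 1, 1] : ℚ)
          * (((a : ℚ) + 2) * ((b : ℚ) + 2) * a.factorial * b.factorial)
        = ((a : ℚ) - b) * (a + b + 2).factorial := by
    intro m
    induction m with
    | zero => intro a b h1 h2; exfalso; omega
    | succ m ih =>
      intro a b hba hm
      rcases Nat.eq_or_lt_of_le hba with heq | hlt
      · -- a = b + 1, equal first two rows
        rcases b with _ | c
        · -- a = 1 : shape [1,1,1]
          obtain rfl : a = 1 := heq.symm
          rw [L6, L5]
          have h3 : sytCount [1, 1] = sytCount [1, 0] := by
            have := L3 0
            norm_num at this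
            exact this
          rw [h3, G0]
          norm_num [Nat.factorial]
        · -- a = c + 2 : shape [c+2, c+2, 1]
          obtain rfl : a = c + 2 := by omega
          rw [show c + 1 + 1 = c + 2 from rfl, L8 c, L5]
          have ih1 := ih (c + 2) c (by omega) (by omega)
          have g := G (c + 2) (c + 2) le_rfl
          rw [idxEq (c + 2 + c + 2) (2 * c + 4) (by omega),
            factStep (c + 2) (c + 1) rfl, factStep (c + 1) c rfl] at ih1
          rw [idxEq (c + 2 + (c + 2)) (2 * c + 4) (by omega),
            factStep (c + 2 + 1) (c + 2) rfl, factStep (c + 2) (c + 1) rfl,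
            factStep (c + 1) c rfl] at g
          rw [factStep (c + 2 + (c + 1) + 2) (2 * c + 4) (by omega),
            factStep (c + 2) (c + 1) rfl, factStep (c + 1) c rfl]
          push_cast at ih1 g ⊢
          apply mul_left_cancel₀ (show ((c : ℚ) + 2) ≠ 0 by positivity)
          linear_combination (((c : ℚ) + 3) * ((c : ℚ) + 1)) * ih1 + ((c : ℚ) + 4) * g
      · -- a > b + 1
        rcases b with _ | c
        · -- b = 0
          obtain ⟨d, rfl⟩ : ∃ d, a = d + 2 := ⟨a - 2, by omega⟩
          rw [L7 d, L5]
          have ih1 := ih (d + 1) 0 (by omega) (by omega)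
          have g := G (d + 2) 1 (by omega)
          rw [show (0 : ℕ) + 1 = 1 from rfl, idxEq (d + 1 + 0 + 2) (d + 3) (by omega),
            factStep (d + 3) (d + 2) rfl, factStep (d + 2) (d + 1) rfl,
            factStep (d + 1) d rfl, Nat.factorial_zero] at ih1
          rw [Nat.factorial_one, idxEq (d + 2 + 1) (d + 3) (by omega),
            factStep (d + 3) (d + 2) rfl, factStep (d + 2) (d + 1) rfl,
            factStep (d + 1) d rfl] at g
          rw [idxEq (d + 2 + 0 + 2) (d + 4) (by omega), factStep (d + 4) (d + 3) rfl,
            factStep (d + 3) (d + 2) rfl, factStep (d + 2) (d + 1) rfl,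
            factStep (d + 1) d rfl, Nat.factorial_zero]
          push_cast at ih1 g ⊢
          apply mul_left_cancel₀ (show ((d : ℚ) + 3) ≠ 0 by positivity)
          linear_combination (((d : ℚ) + 4) * ((d : ℚ) + 2)) * ih1
            + (2 * ((d : ℚ) + 4)) * g
        · -- b = c + 1
          obtain ⟨d, rfl⟩ : ∃ d, a = d + 1 := ⟨a - 1, by omega⟩
          rw [show c + 1 + 1 = c + 2 from rfl, L9 d c (by omega), L5]
          have ih1 := ih d (c + 1) (by omega) (by omega)
          have ih2 := ih (d + 1) c (by omega) (by omega)
          have g := G (d + 1) (c + 2) (by omega)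
          rw [show c + 1 + 1 = c + 2 from rfl, idxEq (d + (c + 1) + 2) (d + c + 3) (by omega),
            factStep (c + 1) c rfl] at ih1
          rw [idxEq (d + 1 + c + 2) (d + c + 3) (by omega),
            factStep (d + 1) d rfl] at ih2
          rw [idxEq (d + 1 + (c + 2)) (d + c + 3) (by omega),
            factStep (c + 2) (c + 1) rfl, factStep (c + 1) c rfl,
            factStep (d + 1 + 1) (d + 1) rfl, factStep (d + 1) d rfl] at g
          rw [factStep (d + 1 + (c + 1) + 2) (d + c + 3) (by omega),
            factStep (d + 1) d rfl, factStep (c + 1) c rfl]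
          push_cast at ih1 ih2 g ⊢
          apply mul_left_cancel₀
            (show ((c : ℚ) + 2) * ((d : ℚ) + 2) ≠ 0 by positivity)
          linear_combination (((d : ℚ) + 3) * ((d : ℚ) + 1) * ((c : ℚ) + 2)) * ih1
            + (((c : ℚ) + 3) * ((c : ℚ) + 1) * ((d : ℚ) + 2)) * ih2
            + (((d : ℚ) + 3) * ((c : ℚ) + 3)) * g
  exact H (a + b) a b hba le_rfl

/-- For `n ≥ 2`, `f_{(n,n-1,1)} = ((n-1)(n+1)/(2n+1)) · C_{n+1}`. -/
theorem stmt3 (n : ℕ) (hn : 2 ≤ n) :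
    (sytCount [n, n - 1, 1] : ℚ) =
      (((n : ℚ) - 1) * ((n : ℚ) + 1)) / (2 * (n : ℚ) + 1) * catalan (n + 1) := by
  obtain ⟨m, rfl⟩ : ∃ m, n = m + 2 := ⟨n - 2, by omega⟩
  have E1 := Hf (m + 2) m (by omega)
  have hcat0 := succ_mul_catalan_eq_centralBinom (m + 3)
  rw [Nat.centralBinom_eq_two_mul_choose, show 2 * (m + 3) = 2 * m + 6 by ring] at hcat0
  have E2 : ((m : ℚ) + 4) * catalan (m + 3) = (Nat.choose (2 * m + 6) (m + 3) : ℚ) := by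
    exact_mod_cast hcat0
  have hch0 := Nat.choose_mul_factorial_mul_factorial (show m + 3 ≤ 2 * m + 6 by omega)
  rw [show 2 * m + 6 - (m + 3) = m + 3 by omega] at hch0
  have E3 : (Nat.choose (2 * m + 6) (m + 3) : ℚ) * (m + 3).factorial * (m + 3).factorial
      = ((2 * m + 6).factorial : ℚ) := by exact_mod_cast hch0
  rw [show m + 2 - 1 = m + 1 from rfl, show m + 2 + 1 = m + 3 from rfl]
  rw [div_mul_eq_mul_div, eq_div_iff (show (2 * ((m + 2 : ℕ) : ℚ) + 1) ≠ 0 by positivity)]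
  -- expand factorials
  rw [idxEq (m + 2 + m + 2) (2 * m + 4) (by omega),
    factStep (m + 2) (m + 1) rfl, factStep (m + 1) m rfl] at E1
  rw [factStep (m + 3) (m + 2) rfl, factStep (m + 2) (m + 1) rfl, factStep (m + 1) m rfl,
    factStep (2 * m + 6) (2 * m + 5) (by omega), factStep (2 * m + 5) (2 * m + 4) (by omega)]
    at E3
  push_cast at E1 E2 E3 ⊢
  apply mul_left_cancel₀ (show ((m : ℚ) + 3) * ((m : ℚ) + 4) * ((m : ℚ) + 2) ^ 2
      * ((m : ℚ) + 1) * ((m.factorial : ℚ)) ^ 2 ≠ 0 by positivity)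
  linear_combination (((m : ℚ) + 3) * (2 * (m : ℚ) + 5)) * E1
    - (((m : ℚ) + 3) ^ 2 * ((m : ℚ) + 2) ^ 2 * ((m : ℚ) + 1) ^ 2
        * ((m.factorial : ℚ)) ^ 2) * E2
    - E3
end

section
/- For all positive integers m and k: σ_k(m) = τ_k(m+1) - τ_{k-1}(m), where σ_k(m) = Σ_{λ ⊢ m, l(λ) ≤ k} d_λ · f_λ and τ_k(m) = Σ_{λ ⊢ m, l(λ) ≤ k} f_λ. -/
open Finset

/-- The weakly decreasing list of parts of a partition. -/
def partsList {m : ℕ} (p : Nat.Partition m) : List ℕ := p.parts.sort (· ≥ ·)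

/-- `f_λ`, the number of standard Young tableaux of shape `p`. -/
noncomputable def fSYT {m : ℕ} (p : Nat.Partition m) : ℕ := sytCount (partsList p)

/-- `d_λ`, the number of distinct part sizes of `p`. -/
def dPart {m : ℕ} (p : Nat.Partition m) : ℕ := p.parts.toFinset.card

/-- `τ_k(m) = Σ_{λ ⊢ m, l(λ) ≤ k} f_λ`. -/
noncomputable def tauSYT (k m : ℕ) : ℕ :=
  ∑ p : Nat.Partition m, if p.parts.card ≤ k then fSYT p else 0

/-- `σ_k(m) = Σ_{λ ⊢ m, l(λ) ≤ k} d_λ f_λ`. -/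
noncomputable def sigmaSYT (k m : ℕ) : ℕ :=
  ∑ p : Nat.Partition m, if p.parts.card ≤ k then dPart p * fSYT p else 0

namespace SytAux

/-- Number of occurrences of letter `j` among the first `t` entries of `w`. -/
def cnt {n : ℕ} (w : Fin n → ℕ) (j t : ℕ) : ℕ :=
  ((Finset.univ : Finset (Fin n)).filter (fun i : Fin n => (i : ℕ) < t ∧ w i = j)).card

/-- Ballot (Yamanouchi) condition. -/
def Ballot {n : ℕ} (w : Fin n → ℕ) : Prop := ∀ t j, cnt w (j + 1) t ≤ cnt w j t

/-- Words of a given shape `ρ`. -/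
abbrev Words (n : ℕ) (ρ : List ℕ) : Type :=
  {w : Fin n → ℕ // Ballot w ∧ ∀ j, cnt w j n = ρ.getD j 0}

/-- Ballot words with letters `< k`. -/
abbrev WordsBdd (n k : ℕ) : Type := {w : Fin n → ℕ // Ballot w ∧ ∀ i, w i < k}

variable {n : ℕ}

lemma cnt_mono (w : Fin n → ℕ) (j : ℕ) {t t' : ℕ} (h : t ≤ t') : cnt w j t ≤ cnt w j t' := by
  apply Finset.card_le_card
  intro i hi
  simp only [Finset.mem_filter] at *
  exact ⟨hi.1, lt_of_lt_of_le hi.2.1 h, hi.2.2⟩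

lemma cnt_of_le (w : Fin n → ℕ) (j : ℕ) {t : ℕ} (h : n ≤ t) : cnt w j t = cnt w j n := by
  unfold cnt
  congr 1
  apply Finset.filter_congr
  intro i _
  have := i.isLt
  simp only [and_congr_left_iff]
  intro _
  constructor <;> intro <;> omega

lemma cnt_anti {w : Fin n → ℕ} (hb : Ballot w) {j j' : ℕ} (h : j ≤ j') (t : ℕ) :
    cnt w j' t ≤ cnt w j t := by
  induction j' with
  | zero => interval_cases j; exact le_rfl
  | succ j'' ih =>
      rcases Nat.eq_or_lt_of_le h with rfl | hlt
      · exact le_rfl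
      · exact le_trans (hb t j'') (ih (by omega))

lemma cnt_pos_of_letter {w : Fin n → ℕ} (i : Fin n) : 0 < cnt w (w i) n := by
  apply Finset.card_pos.mpr
  exact ⟨i, by simp [Finset.mem_filter, i.isLt]⟩

lemma cnt_full (w : Fin n → ℕ) (j : ℕ) :
    cnt w j n = (Finset.univ.filter (fun i : Fin n => w i = j)).card := by
  unfold cnt; congr 1; apply Finset.filter_congr; intro i _; simp [i.isLt]

lemma sum_cnt {w : Fin n → ℕ} {k : ℕ} (hw : ∀ i, w i < k) :
    ∑ j ∈ Finset.range k, cnt w j n = n := by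
  have := Finset.card_eq_sum_card_fiberwise (f := w) (s := Finset.univ) (t := Finset.range k)
    (fun i _ => Finset.mem_range.mpr (hw i))
  simp only [Finset.card_univ, Fintype.card_fin] at this
  rw [show (∑ j ∈ Finset.range k, cnt w j n) = ∑ b ∈ Finset.range k,
    (Finset.univ.filter (fun a : Fin n => w a = b)).card from
      Finset.sum_congr rfl (fun j _ => cnt_full w j)]
  omega


section Rank
variable {α : Type*} [LinearOrder α]

lemma card_filter_lt_orderEmbOfFin (s : Finset α) {k : ℕ} (h : s.card = k) (i : Fin k) :
    (s.filter (fun x => x < s.orderEmbOfFin h i)).card = i := by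
  have himg : s.filter (fun x => x < s.orderEmbOfFin h i)
      = (Finset.Iio i).image (s.orderEmbOfFin h) := by
    ext x
    simp only [Finset.mem_filter, Finset.mem_image, Finset.mem_Iio]
    constructor
    · rintro ⟨hx, hlt⟩
      have : x ∈ Set.range (s.orderEmbOfFin h) := by
        rw [Finset.range_orderEmbOfFin]; exact hx
      obtain ⟨m, rfl⟩ := this
      exact ⟨m, by simpa using hlt, rfl⟩
    · rintro ⟨m, hm, rfl⟩
      exact ⟨Finset.orderEmbOfFin_mem s h m, by simpa using hm⟩
  rw [himg, Finset.card_image_of_injective _ (s.orderEmbOfFin h).injective, Fin.card_Iio]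

lemma eq_of_card_filter_lt_eq {s : Finset α} {x y : α} (hx : x ∈ s) (hy : y ∈ s)
    (h : (s.filter (fun z => z < x)).card = (s.filter (fun z => z < y)).card) : x = y := by
  by_contra hne
  wlog hlt : x < y generalizing x y
  · exact this hy hx h.symm (Ne.symm hne) (lt_of_le_of_ne (not_lt.mp hlt) (fun h' => hne h'.symm))
  · have hsub : insert x (s.filter (fun z => z < x)) ⊆ s.filter (fun z => z < y) := by
      intro z hz
      rcases Finset.mem_insert.mp hz with rfl | hz
      · exact Finset.mem_filter.mpr ⟨hx, hlt⟩
      · have := Finset.mem_filter.mp hz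
        exact Finset.mem_filter.mpr ⟨this.1, lt_trans this.2 hlt⟩
    have hcard := Finset.card_le_card hsub
    rw [Finset.card_insert_of_notMem (by simp)] at hcard
    omega

lemma orderEmbOfFin_eq_iff {s : Finset α} {k : ℕ} (h : s.card = k) (i : Fin k) {x : α}
    (hx : x ∈ s) (hr : (s.filter (fun z => z < x)).card = i) :
    s.orderEmbOfFin h i = x :=
  eq_of_card_filter_lt_eq (Finset.orderEmbOfFin_mem s h i) hx
    (by rw [card_filter_lt_orderEmbOfFin, hr])

end Rank

lemma mem_diagCells {ρ : List ℕ} {a : ℕ × ℕ} :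
    a ∈ diagCells ρ ↔ a.1 < ρ.length ∧ a.2 < ρ.getD a.1 0 := by
  unfold diagCells
  simp only [Finset.mem_biUnion, Finset.mem_range, Finset.mem_product, Finset.mem_singleton]
  constructor
  · rintro ⟨i, hi, h1, h2⟩
    subst h1
    exact ⟨hi, h2⟩
  · rintro ⟨h1, h2⟩
    exact ⟨a.1, h1, rfl, h2⟩

lemma getD_pos_iff {ρ : List ℕ} (hpos : ∀ x ∈ ρ, 0 < x) {j : ℕ} :
    0 < ρ.getD j 0 ↔ j < ρ.length := by
  constructor
  · intro h
    by_contra hc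
    rw [List.getD_eq_default _ _ (not_lt.mp hc)] at h
    omega
  · intro h
    rw [List.getD_eq_getElem _ _ h]
    exact hpos _ (List.getElem_mem h)

lemma getD_anti {ρ : List ℕ} (hs : ρ.Pairwise (· ≥ ·)) {a b : ℕ} (h : a ≤ b) :
    ρ.getD b 0 ≤ ρ.getD a 0 := by
  by_cases hb : b < ρ.length
  · have ha : a < ρ.length := lt_of_le_of_lt h hb
    rw [List.getD_eq_getElem _ _ hb, List.getD_eq_getElem _ _ ha]
    rcases Nat.eq_or_lt_of_le h with rfl | hlt
    · exact le_rfl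
    · exact List.pairwise_iff_get.mp hs ⟨a, ha⟩ ⟨b, hb⟩ hlt
  · rw [List.getD_eq_default _ _ (not_lt.mp hb)]
    omega

lemma card_row (ρ : List ℕ) (j : ℕ) :
    ((diagCells ρ).filter (fun c => c.1 = j)).card = ρ.getD j 0 := by
  by_cases hj : j < ρ.length
  · have : (diagCells ρ).filter (fun c => c.1 = j) = {j} ×ˢ Finset.range (ρ.getD j 0) := by
      ext c
      simp only [Finset.mem_filter, mem_diagCells, Finset.mem_product, Finset.mem_singleton,
        Finset.mem_range]
      constructor
      · rintro ⟨⟨h1, h2⟩, rfl⟩; exact ⟨rfl, h2⟩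
      · rintro ⟨h1, h2⟩; subst h1; exact ⟨⟨hj, h2⟩, rfl⟩
    rw [this]
    simp
  · have h0 : ρ.getD j 0 = 0 := List.getD_eq_default _ _ (not_lt.mp hj)
    rw [h0]
    rw [Finset.card_eq_zero, Finset.filter_eq_empty_iff]
    rintro c hc rfl
    exact hj (mem_diagCells.mp hc).1

lemma sum_getD_range (ρ : List ℕ) : ∑ i ∈ Finset.range ρ.length, ρ.getD i 0 = ρ.sum := by
  induction ρ with
  | nil => simp
  | cons a tl ih =>
      rw [List.length_cons, Finset.sum_range_succ']
      simp only [List.getD_cons_succ, List.getD_cons_zero, List.sum_cons]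
      omega

lemma card_diagCells (ρ : List ℕ) : (diagCells ρ).card = ρ.sum := by
  have : (diagCells ρ).card = ∑ j ∈ Finset.range ρ.length,
      ((diagCells ρ).filter (fun c => c.1 = j)).card := by
    apply Finset.card_eq_sum_card_fiberwise
    intro c hc
    exact Finset.mem_range.mpr (mem_diagCells.mp hc).1
  rw [this]
  rw [← sum_getD_range ρ]
  exact Finset.sum_congr rfl (fun j _ => card_row ρ j)

section ClaimA

variable {ρ : List ℕ}

/-- The filling predicate from `sytCount`. -/
def IsFilling {ρ : List ℕ} (T : diagCells ρ → Fin (diagCells ρ).card) : Prop :=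
  Function.Bijective T ∧
    (∀ a b : diagCells ρ, (a : ℕ × ℕ).1 = (b : ℕ × ℕ).1 → (a : ℕ × ℕ).2 < (b : ℕ × ℕ).2 → T a < T b) ∧
    (∀ a b : diagCells ρ, (a : ℕ × ℕ).2 = (b : ℕ × ℕ).2 → (a : ℕ × ℕ).1 < (b : ℕ × ℕ).1 → T a < T b)

lemma sytCount_eq (ρ : List ℕ) :
    sytCount ρ = Nat.card {T : diagCells ρ → Fin (diagCells ρ).card // IsFilling T} := rfl

/-- Helper: cardinality of a filter on the subtype vs on the finset. -/
lemma card_filter_subtype {α : Type*} (s : Finset α) (p : α → Prop) [DecidablePred p] :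
    ((Finset.univ : Finset {x // x ∈ s}).filter (fun c : {x // x ∈ s} => p c.1)).card
      = (s.filter p).card := by
  apply Finset.card_bij (fun c _ => c.1)
  · intro c hc
    simp only [Finset.mem_filter] at *
    exact ⟨c.2, hc.2⟩
  · intro a ha b hb hab
    exact Subtype.ext hab
  · intro b hb
    simp only [Finset.mem_filter] at hb
    exact ⟨⟨b, hb.1⟩, by simp [hb.2], rfl⟩

/-- The word read off from a filling: `w i` is the row of the cell containing value `i`. -/
noncomputable def wordOf (T : diagCells ρ → Fin (diagCells ρ).card)
    (hbij : Function.Bijective T) : Fin (diagCells ρ).card → ℕ :=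
  fun i => (((Equiv.ofBijective T hbij).symm i : diagCells ρ) : ℕ × ℕ).1

lemma cnt_wordOf (T : diagCells ρ → Fin (diagCells ρ).card) (hbij : Function.Bijective T)
    (j t : ℕ) :
    cnt (wordOf T hbij) j t =
      ((Finset.univ : Finset (diagCells ρ)).filter
        (fun c : diagCells ρ => (c : ℕ × ℕ).1 = j ∧ ((T c : ℕ) < t))).card := by
  set e := Equiv.ofBijective T hbij with he
  apply Finset.card_bij (fun i _ => e.symm i)
  · intro i hi
    simp only [Finset.mem_filter, Finset.mem_univ, true_and] at *
    have hTi : T (e.symm i) = i := e.apply_symm_apply i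
    exact ⟨hi.2, by rw [hTi]; exact hi.1⟩
  · intro a ha b hb hab
    exact e.symm.injective hab
  · intro c hc
    simp only [Finset.mem_filter, Finset.mem_univ, true_and] at hc
    refine ⟨T c, ?_, ?_⟩
    · simp only [Finset.mem_filter, Finset.mem_univ, true_and]
      refine ⟨hc.2, ?_⟩
      show (((e.symm (T c)) : diagCells ρ) : ℕ × ℕ).1 = j
      have : e.symm (T c) = c := e.symm_apply_apply c
      rw [this]; exact hc.1
    · exact e.symm_apply_apply c

lemma shape_wordOf (T : diagCells ρ → Fin (diagCells ρ).card) (hbij : Function.Bijective T)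
    (j : ℕ) : cnt (wordOf T hbij) j (diagCells ρ).card = ρ.getD j 0 := by
  rw [cnt_wordOf]
  have h1 : ((Finset.univ : Finset (diagCells ρ)).filter
      (fun c : diagCells ρ => (c : ℕ × ℕ).1 = j ∧ ((T c : ℕ) < (diagCells ρ).card))).card
      = ((Finset.univ : Finset (diagCells ρ)).filter
      (fun c : diagCells ρ => (c : ℕ × ℕ).1 = j)).card := by
    congr 1
    apply Finset.filter_congr
    intro c _
    simp [(T c).isLt]
  rw [h1, card_filter_subtype (diagCells ρ) (fun x => x.1 = j), card_row]

lemma ballot_wordOf (hsort : ρ.Pairwise (· ≥ ·)) (T : diagCells ρ → Fin (diagCells ρ).card)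
    (hT : IsFilling T) : Ballot (wordOf T hT.1) := by
  classical
  intro t j
  rw [cnt_wordOf, cnt_wordOf]
  set f : diagCells ρ → diagCells ρ := fun c =>
    if h : ((j, (c : ℕ × ℕ).2) ∈ diagCells ρ) then ⟨(j, (c : ℕ × ℕ).2), h⟩ else c with hf
  have hmem : ∀ c : diagCells ρ, (c : ℕ × ℕ).1 = j + 1 → ((j, (c : ℕ × ℕ).2) ∈ diagCells ρ) := by
    intro c hrow
    have hcm := mem_diagCells.mp c.2
    rw [mem_diagCells]
    constructor
    · simp only []
      omega
    · have h2 : (c : ℕ × ℕ).2 < ρ.getD (j+1) 0 := by rw [← hrow]; exact hcm.2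
      have h3 : ρ.getD (j+1) 0 ≤ ρ.getD j 0 := getD_anti hsort (by omega)
      simp only []
      omega
  apply Finset.card_le_card_of_injOn f
  · intro c hc
    simp only [Finset.mem_coe, Finset.mem_filter, Finset.mem_univ, true_and] at hc ⊢
    obtain ⟨hrow, hTc⟩ := hc
    have hm := hmem c hrow
    rw [hf]
    simp only [dif_pos hm]
    refine ⟨by trivial, ?_⟩
    have hlt : T ⟨(j, (c : ℕ × ℕ).2), hm⟩ < T c := by
      apply hT.2.2
      · rfl
      · show j < (c : ℕ × ℕ).1
        omega
    exact lt_trans hlt hTc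
  · intro a ha b hb hab
    simp only [Finset.mem_coe, Finset.mem_filter, Finset.mem_univ, true_and] at ha hb
    have hma := hmem a ha.1
    have hmb := hmem b hb.1
    simp only [hf, dif_pos hma, dif_pos hmb] at hab
    have h2 : (a : ℕ × ℕ).2 = (b : ℕ × ℕ).2 := by
      have := congrArg (fun x : diagCells ρ => (x : ℕ × ℕ).2) hab
      simpa using this
    apply Subtype.ext
    apply Prod.ext
    · rw [ha.1, hb.1]
    · exact h2

end ClaimA

section ClaimB

variable {ρ : List ℕ}

lemma lt_length_of_getD_pos {ρ : List ℕ} {j : ℕ} (h : 0 < ρ.getD j 0) : j < ρ.length := by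
  by_contra hc
  rw [List.getD_eq_default _ _ (not_lt.mp hc)] at h
  omega

def occ {n : ℕ} (w : Fin n → ℕ) (j : ℕ) : Finset (Fin n) :=
  Finset.univ.filter (fun i => w i = j)

lemma card_occ {n : ℕ} (w : Fin n → ℕ) (j : ℕ) : (occ w j).card = cnt w j n :=
  (cnt_full w j).symm

lemma rank_occ {n : ℕ} (w : Fin n → ℕ) (j : ℕ) (i : Fin n) :
    ((occ w j).filter (fun x => x < i)).card = cnt w j i.val := by
  unfold occ cnt
  rw [Finset.filter_filter]
  congr 1
  apply Finset.filter_congr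
  intro x _
  simp only [Fin.lt_def]
  tauto

lemma cnt_succ_of_eq {n : ℕ} (w : Fin n → ℕ) {j : ℕ} {i : Fin n} (h : w i = j) :
    cnt w j (i.val + 1) = cnt w j i.val + 1 := by
  unfold cnt
  have hset : (Finset.univ.filter (fun x : Fin n => (x : ℕ) < i.val + 1 ∧ w x = j))
      = insert i (Finset.univ.filter (fun x : Fin n => (x : ℕ) < i.val ∧ w x = j)) := by
    ext x
    simp only [Finset.mem_filter, Finset.mem_univ, true_and, Finset.mem_insert]
    constructor
    · rintro ⟨hlt, hx⟩
      rcases Nat.lt_or_ge x.val i.val with h1 | h1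
      · exact Or.inr ⟨h1, hx⟩
      · exact Or.inl (Fin.ext (by omega))
    · rintro (rfl | ⟨h1, h2⟩)
      · exact ⟨by omega, h⟩
      · exact ⟨by omega, h2⟩
  rw [hset, Finset.card_insert_of_notMem (by simp)]

/-- The filling built from a word: cell `(j, c)` receives the `c`-th occurrence of `j`. -/
def fillingOfWord {n : ℕ} (w : Fin n → ℕ) (hs : ∀ j, cnt w j n = ρ.getD j 0) :
    diagCells ρ → Fin n :=
  fun c => (occ w (c : ℕ × ℕ).1).orderEmbOfFin
    (by rw [card_occ, hs]) ⟨(c : ℕ × ℕ).2, (mem_diagCells.mp c.2).2⟩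

lemma letter_fillingOfWord {n : ℕ} (w : Fin n → ℕ) (hs : ∀ j, cnt w j n = ρ.getD j 0)
    (c : diagCells ρ) : w (fillingOfWord w hs c) = (c : ℕ × ℕ).1 := by
  have := Finset.orderEmbOfFin_mem (occ w (c : ℕ × ℕ).1)
    (by rw [card_occ, hs] : (occ w (c : ℕ × ℕ).1).card = ρ.getD (c : ℕ × ℕ).1 0)
    ⟨(c : ℕ × ℕ).2, (mem_diagCells.mp c.2).2⟩
  exact (Finset.mem_filter.mp this).2

lemma rank_fillingOfWord {n : ℕ} (w : Fin n → ℕ) (hs : ∀ j, cnt w j n = ρ.getD j 0)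
    (c : diagCells ρ) :
    cnt w (c : ℕ × ℕ).1 ((fillingOfWord w hs c) : ℕ) = (c : ℕ × ℕ).2 := by
  rw [← rank_occ]
  exact card_filter_lt_orderEmbOfFin _ _ _

lemma injective_fillingOfWord {n : ℕ} (w : Fin n → ℕ) (hs : ∀ j, cnt w j n = ρ.getD j 0) :
    Function.Injective (fillingOfWord w hs) := by
  intro a b hab
  have hr : (a : ℕ × ℕ).1 = (b : ℕ × ℕ).1 := by
    rw [← letter_fillingOfWord w hs a, ← letter_fillingOfWord w hs b, hab]
  have hc : (a : ℕ × ℕ).2 = (b : ℕ × ℕ).2 := by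
    rw [← rank_fillingOfWord w hs a, ← rank_fillingOfWord w hs b, hab, hr]
  exact Subtype.ext (Prod.ext hr hc)

lemma isFilling_fillingOfWord (w : Fin (diagCells ρ).card → ℕ) (hb : Ballot w)
    (hs : ∀ j, cnt w j (diagCells ρ).card = ρ.getD j 0) :
    IsFilling (fillingOfWord w hs) := by
  refine ⟨?_, ?_, ?_⟩
  · rw [Fintype.bijective_iff_injective_and_card]
    exact ⟨injective_fillingOfWord w hs, by simp⟩
  · -- rows increase
    rintro ⟨⟨r, ca⟩, hma⟩ ⟨⟨r2, cb⟩, hmb⟩ h1 h2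
    simp only at h1 h2
    subst h1
    unfold fillingOfWord
    simp only
    have := (Finset.orderEmbOfFin (occ w r) (by rw [card_occ, hs] :
      (occ w r).card = ρ.getD r 0)).lt_iff_lt (a := ⟨ca, (mem_diagCells.mp hma).2⟩)
      (b := ⟨cb, (mem_diagCells.mp hmb).2⟩)
    rw [this]
    exact h2
  · -- columns increase
    rintro a b h1 h2
    by_contra hcon
    have hba : fillingOfWord w hs b ≤ fillingOfWord w hs a := not_lt.mp hcon
    set ia := fillingOfWord w hs a with hia
    set ib := fillingOfWord w hs b with hib
    have hwa : w ia = (a : ℕ × ℕ).1 := letter_fillingOfWord w hs a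
    have hwb : w ib = (b : ℕ × ℕ).1 := letter_fillingOfWord w hs b
    have hra : cnt w (a : ℕ × ℕ).1 (ia : ℕ) = (a : ℕ × ℕ).2 := rank_fillingOfWord w hs a
    have hrb : cnt w (b : ℕ × ℕ).1 (ib : ℕ) = (b : ℕ × ℕ).2 := rank_fillingOfWord w hs b
    have hsucc : cnt w (b : ℕ × ℕ).1 ((ib : ℕ) + 1) = (b : ℕ × ℕ).2 + 1 := by
      rw [cnt_succ_of_eq w hwb, hrb]
    have hchain : cnt w (b : ℕ × ℕ).1 ((ib : ℕ) + 1) ≤ cnt w (a : ℕ × ℕ).1 ((ib : ℕ) + 1) :=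
      cnt_anti hb (le_of_lt h2) _
    rcases eq_or_lt_of_le hba with heq | hlt
    · have : w ia = w ib := by rw [heq]
      rw [hwa, hwb] at this
      omega
    · have hmono : cnt w (a : ℕ × ℕ).1 ((ib : ℕ) + 1) ≤ cnt w (a : ℕ × ℕ).1 (ia : ℕ) :=
        cnt_mono w _ (by exact_mod_cast hlt)
      rw [h1] at hra
      omega

/-- The main bijection: fillings of shape `ρ` are equinumerous with ballot words of shape `ρ`. -/
noncomputable def fillingWordEquiv (hsort : ρ.Pairwise (· ≥ ·)) :
    {T : diagCells ρ → Fin (diagCells ρ).card // IsFilling T} ≃ Words (diagCells ρ).card ρ where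
  toFun TT := ⟨wordOf TT.1 TT.2.1, ballot_wordOf hsort TT.1 TT.2, shape_wordOf TT.1 TT.2.1⟩
  invFun ww := ⟨fillingOfWord ww.1 ww.2.2, isFilling_fillingOfWord ww.1 ww.2.1 ww.2.2⟩
  left_inv := by
    rintro ⟨T, hT⟩
    apply Subtype.ext
    funext c
    simp only
    set w := wordOf T hT.1 with hw
    set e := Equiv.ofBijective T hT.1 with he
    apply orderEmbOfFin_eq_iff
    · -- T c ∈ occ w c.1
      simp only [occ, Finset.mem_filter, Finset.mem_univ, true_and]
      show (((e.symm (T c)) : diagCells ρ) : ℕ × ℕ).1 = (c : ℕ × ℕ).1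
      rw [show e.symm (T c) = c from e.symm_apply_apply c]
    · -- rank of T c in occ
      rw [rank_occ]
      rw [cnt_wordOf]
      have hstep : ((Finset.univ : Finset (diagCells ρ)).filter
          (fun c' : diagCells ρ => (c' : ℕ × ℕ).1 = (c : ℕ × ℕ).1 ∧ ((T c' : ℕ) < (T c : ℕ)))).card
          = ((Finset.univ : Finset (diagCells ρ)).filter
          (fun c' : diagCells ρ => (c' : ℕ × ℕ).1 = (c : ℕ × ℕ).1 ∧ (c' : ℕ × ℕ).2 < (c : ℕ × ℕ).2)).card := by
      -- same-row cells with smaller entry are exactly earlier columns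
        congr 1
        apply Finset.filter_congr
        intro c' _
        simp only [and_congr_right_iff]
        intro hrow
        constructor
        · intro hlt
          by_contra hge
          rcases eq_or_lt_of_le (not_lt.mp hge) with heq | hgt
          · have : c' = c := Subtype.ext (Prod.ext hrow heq.symm)
            rw [this] at hlt
            omega
          · have := hT.2.1 c c' hrow.symm hgt
            rw [Fin.lt_def] at this
            omega
        · intro hlt
          have := hT.2.1 c' c hrow hlt
          rw [Fin.lt_def] at this
          exact this
      rw [hstep, card_filter_subtype (diagCells ρ)
        (fun x => x.1 = (c : ℕ × ℕ).1 ∧ x.2 < (c : ℕ × ℕ).2)]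
      have hmemc := mem_diagCells.mp c.2
      have hseg : (diagCells ρ).filter (fun x => x.1 = (c : ℕ × ℕ).1 ∧ x.2 < (c : ℕ × ℕ).2)
          = {(c : ℕ × ℕ).1} ×ˢ Finset.range (c : ℕ × ℕ).2 := by
        ext x
        simp only [Finset.mem_filter, mem_diagCells, Finset.mem_product, Finset.mem_singleton,
          Finset.mem_range]
        constructor
        · rintro ⟨_, h1, h2⟩
          exact ⟨h1, h2⟩
        · rintro ⟨h1, h2⟩
          refine ⟨⟨?_, ?_⟩, h1, h2⟩
          · rw [h1]; exact hmemc.1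
          · rw [h1]; omega
      rw [hseg]
      simp
  right_inv := by
    rintro ⟨w, hb, hs⟩
    apply Subtype.ext
    funext i
    simp only
    set Tf := fillingOfWord w hs with hTf
    set e := Equiv.ofBijective Tf (isFilling_fillingOfWord w hb hs).1 with he
    show (((e.symm i) : diagCells ρ) : ℕ × ℕ).1 = w i
    have hpos : 0 < ρ.getD (w i) 0 := by
      rw [← hs (w i)]
      exact cnt_pos_of_letter i
    have hcol : cnt w (w i) (i : ℕ) < ρ.getD (w i) 0 := by
      have h1 : cnt w (w i) ((i : ℕ) + 1) = cnt w (w i) (i : ℕ) + 1 := cnt_succ_of_eq w rfl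
      have h2 : cnt w (w i) ((i : ℕ) + 1) ≤ cnt w (w i) (diagCells ρ).card :=
        cnt_mono w _ i.isLt
      rw [hs (w i)] at h2
      omega
    have hm : ((w i, cnt w (w i) (i : ℕ)) : ℕ × ℕ) ∈ diagCells ρ := by
      rw [mem_diagCells]
      exact ⟨lt_length_of_getD_pos hpos, hcol⟩
    have hTc : Tf ⟨(w i, cnt w (w i) (i : ℕ)), hm⟩ = i := by
      rw [hTf]
      unfold fillingOfWord
      apply orderEmbOfFin_eq_iff
      · simp [occ]
      · rw [rank_occ]
    have : e.symm i = ⟨(w i, cnt w (w i) (i : ℕ)), hm⟩ := by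
      rw [Equiv.symm_apply_eq]
      exact hTc.symm
    rw [this]

lemma sytCount_eq_card_words (ρ : List ℕ) (hsort : ρ.Pairwise (· ≥ ·)) :
    sytCount ρ = Nat.card (Words (diagCells ρ).card ρ) := by
  rw [sytCount_eq]
  exact Nat.card_congr (fillingWordEquiv hsort)

lemma words_letter_lt {n : ℕ} {ρ : List ℕ} (ww : Words n ρ) (i : Fin n) :
    ww.1 i < ρ.length + 1 := by
  have hpos : 0 < ρ.getD (ww.1 i) 0 := by
    rw [← ww.2.2 (ww.1 i)]
    exact cnt_pos_of_letter i
  have := lt_length_of_getD_pos hpos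
  omega

instance finite_words (n : ℕ) (ρ : List ℕ) : Finite (Words n ρ) := by
  apply Finite.of_injective (β := Fin n → Fin (ρ.length + 1))
    (fun ww => fun i => ⟨ww.1 i, words_letter_lt ww i⟩)
  intro a b hab
  apply Subtype.ext
  funext i
  have := congrFun hab i
  exact congrArg Fin.val this

end ClaimB
section Shape

variable {n k : ℕ}

lemma sum_map_range (f : ℕ → ℕ) (k : ℕ) :
    ((List.range k).map f).sum = ∑ j ∈ Finset.range k, f j := by
  induction k with
  | zero => simp
  | succ k ih =>
      rw [List.range_succ, List.map_append, List.sum_append, Finset.sum_range_succ, ih]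
      simp

lemma sum_filter_pos (l : List ℕ) : (l.filter (fun x => 0 < x)).sum = l.sum := by
  induction l with
  | nil => simp
  | cons a tl ih =>
      by_cases ha : 0 < a
      · rw [List.filter_cons_of_pos (by simpa using ha), List.sum_cons, List.sum_cons, ih]
      · rw [List.filter_cons_of_neg (by simpa using ha), List.sum_cons, ih]
        omega

lemma sorted_filter_pos_getD (l : List ℕ) (hs : l.Pairwise (· ≥ ·)) (j : ℕ) :
    (l.filter (fun x => 0 < x)).getD j 0 = l.getD j 0 := by
  induction l generalizing j with
  | nil => simp
  | cons a tl ih =>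
      obtain ⟨h1, h2⟩ := List.pairwise_cons.mp hs
      by_cases ha : 0 < a
      · rw [List.filter_cons_of_pos (by simpa using ha)]
        cases j with
        | zero => simp
        | succ j => simpa using ih h2 j
      · have ha0 : a = 0 := by omega
        have htl : ∀ x ∈ tl, x = 0 := by
          intro x hx
          have := h1 x hx
          omega
        rw [List.filter_cons_of_neg (by simpa using ha)]
        have hfil : tl.filter (fun x => 0 < x) = [] := by
          rw [List.filter_eq_nil_iff]
          intro x hx
          simp [htl x hx]
        rw [hfil]
        have : (a :: tl).getD j 0 = 0 := by
          cases j with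
          | zero => simpa using ha0
          | succ j =>
              simp only [List.getD_cons_succ]
              by_cases hj : j < tl.length
              · rw [List.getD_eq_getElem _ _ hj]
                exact htl _ (List.getElem_mem hj)
              · exact List.getD_eq_default _ _ (not_lt.mp hj)
        rw [this]
        simp

/-- The row-length list read off from a bounded word. -/
def shapeList {n : ℕ} (w : Fin n → ℕ) (k : ℕ) : List ℕ :=
  ((List.range k).map (fun j => cnt w j n)).filter (fun x => 0 < x)

lemma sorted_full {w : Fin n → ℕ} (hb : Ballot w) :
    ((List.range k).map (fun j => cnt w j n)).Pairwise (· ≥ ·) := by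
  rw [List.pairwise_map]
  exact (List.pairwise_lt_range (n := k)).imp (fun {a b} hab => cnt_anti hb (le_of_lt hab) n)

lemma sorted_shapeList {w : Fin n → ℕ} (hb : Ballot w) : (shapeList w k).Pairwise (· ≥ ·) :=
  (sorted_full hb).filter _

lemma getD_full {w : Fin n → ℕ} {j : ℕ} (hj : j < k) :
    ((List.range k).map (fun j => cnt w j n)).getD j 0 = cnt w j n := by
  rw [List.getD_eq_getElem _ _ (by simpa using hj)]
  simp

lemma cnt_eq_zero_of_ge {w : Fin n → ℕ} (hw : ∀ i, w i < k) {j : ℕ} (hj : k ≤ j) :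
    cnt w j n = 0 := by
  unfold cnt
  rw [Finset.card_eq_zero, Finset.filter_eq_empty_iff]
  intro i _
  have := hw i
  intro hcon
  omega

lemma getD_shapeList {w : Fin n → ℕ} (hb : Ballot w) (hw : ∀ i, w i < k) (j : ℕ) :
    (shapeList w k).getD j 0 = cnt w j n := by
  by_cases hj : j < k
  · rw [shapeList, sorted_filter_pos_getD _ (sorted_full hb), getD_full hj]
  · have h1 : (shapeList w k).length ≤ k :=
      le_trans (List.length_filter_le _ _) (by simp)
    rw [List.getD_eq_default _ _ (by omega), cnt_eq_zero_of_ge hw (by omega)]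

/-- The shape of a bounded ballot word, as a partition of `n`. -/
def shapePartition (w : Fin n → ℕ) (hw : ∀ i, w i < k) : Nat.Partition n where
  parts := ↑(shapeList w k)
  parts_pos := by
    intro x hx
    rw [Multiset.mem_coe] at hx
    simpa using (List.of_mem_filter hx)
  parts_sum := by
    rw [Multiset.sum_coe, shapeList, sum_filter_pos, sum_map_range]
    exact sum_cnt hw

lemma parts_card_shapePartition {w : Fin n → ℕ} (hw : ∀ i, w i < k) :
    (shapePartition w hw).parts.card ≤ k := by
  have h0 : (shapePartition w hw).parts = ↑(shapeList w k) := rfl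
  rw [h0, Multiset.coe_card]
  exact le_trans (List.length_filter_le _ _) (by simp)

lemma partsList_shapePartition {w : Fin n → ℕ} (hb : Ballot w) (hw : ∀ i, w i < k) :
    partsList (shapePartition w hw) = shapeList w k := by
  refine (fun h1 h2 h3 => List.Perm.eq_of_pairwise' (r := (· ≥ ·)) h2 h3 h1) ?_ ?_ ?_
  · rw [← Multiset.coe_eq_coe]
    unfold partsList
    rw [Multiset.sort_eq]
    rfl
  · exact Multiset.pairwise_sort _ _
  · exact sorted_shapeList hb

lemma length_partsList {m : ℕ} (p : Nat.Partition m) :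
    (partsList p).length = p.parts.card := Multiset.length_sort _

lemma sum_partsList {m : ℕ} (p : Nat.Partition m) : (partsList p).sum = m := by
  have : ((partsList p : List ℕ) : Multiset ℕ).sum = p.parts.sum := by
    rw [partsList, Multiset.sort_eq]
  rw [Multiset.sum_coe] at this
  rw [this, p.parts_sum]

lemma pos_partsList {m : ℕ} (p : Nat.Partition m) : ∀ x ∈ partsList p, 0 < x := by
  intro x hx
  exact p.parts_pos (Multiset.mem_sort _ |>.mp hx)

/-- letters of a word of shape `partsList p` are bounded by the number of parts. -/
lemma words_letter_lt_card {m : ℕ} {p : Nat.Partition m} (ww : Words m (partsList p))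
    (i : Fin m) : ww.1 i < p.parts.card := by
  have hpos : 0 < (partsList p).getD (ww.1 i) 0 := by
    rw [← ww.2.2 (ww.1 i)]
    exact cnt_pos_of_letter i
  have := lt_length_of_getD_pos hpos
  rwa [length_partsList] at this

lemma map_getD_range_eq {L : List ℕ} {k : ℕ} (h : L.length ≤ k) :
    (List.range k).map (fun j => L.getD j 0) = L ++ List.replicate (k - L.length) 0 := by
  apply List.ext_getElem
  · simp
    omega
  · intro i h1 h2
    simp only [List.getElem_map, List.getElem_range]
    by_cases hi : i < L.length
    · rw [List.getD_eq_getElem _ _ hi, List.getElem_append_left hi]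
    · rw [List.getD_eq_default _ _ (not_lt.mp hi),
        List.getElem_append_right (not_lt.mp hi), List.getElem_replicate]

lemma shapeList_of_words {m : ℕ} {p : Nat.Partition m} (hpk : p.parts.card ≤ k)
    (w : Fin m → ℕ) (hsh : ∀ j, cnt w j m = (partsList p).getD j 0) :
    shapeList w k = partsList p := by
  unfold shapeList
  have h1 : (List.range k).map (fun j => cnt w j m) =
      (List.range k).map (fun j => (partsList p).getD j 0) := by
    apply List.map_congr_left
    intro j _
    exact hsh j
  rw [h1, map_getD_range_eq (by rw [length_partsList]; exact hpk)]
  rw [List.filter_append]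
  have h2 : (partsList p).filter (fun x => 0 < x) = partsList p := by
    rw [List.filter_eq_self]
    intro x hx
    simpa using pos_partsList p x hx
  have h3 : (List.replicate (k - (partsList p).length) 0).filter (fun x => 0 < x) = [] := by
    rw [List.filter_eq_nil_iff]
    intro x hx
    rw [List.eq_of_mem_replicate hx]
    simp
  rw [h2, h3, List.append_nil]

lemma shapePartition_of_words {m : ℕ} {p : Nat.Partition m} (hpk : p.parts.card ≤ k)
    (w : Fin m → ℕ) (hw : ∀ i, w i < k) (hsh : ∀ j, cnt w j m = (partsList p).getD j 0) :
    shapePartition w hw = p := by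
  apply Nat.Partition.ext
  show ↑(shapeList w k) = p.parts
  rw [shapeList_of_words hpk w hsh, partsList, Multiset.sort_eq]

/-- Classification of bounded ballot words by shape. -/
noncomputable def wordsBddEquiv (n k : ℕ) :
    WordsBdd n k ≃ Σ p : {p : Nat.Partition n // p.parts.card ≤ k}, Words n (partsList p.1) where
  toFun ww :=
    ⟨⟨shapePartition ww.1 ww.2.2, parts_card_shapePartition ww.2.2⟩,
      ⟨ww.1, ww.2.1, by
        intro j
        rw [partsList_shapePartition ww.2.1 ww.2.2]
        exact (getD_shapeList ww.2.1 ww.2.2 j).symm⟩⟩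
  invFun pw := ⟨pw.2.1, pw.2.2.1, fun i =>
    lt_of_lt_of_le (words_letter_lt_card pw.2 i) pw.1.2⟩
  left_inv := by
    rintro ⟨w, hb, hw⟩
    rfl
  right_inv := by
    rintro ⟨⟨p, hp⟩, ⟨w, hbw, hshw⟩⟩
    have h : shapePartition w (fun i => lt_of_lt_of_le
        (words_letter_lt_card ⟨w, hbw, hshw⟩ i) hp) = p :=
      shapePartition_of_words hp w _ hshw
    dsimp only
    refine Sigma.ext (Subtype.ext ?_) ((Subtype.heq_iff_coe_eq ?_).mpr rfl)
    · exact h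
    · intro x
      dsimp only
      rw [h]

end Shape
section Counting

lemma nat_card_sigma {ι : Type*} [Fintype ι] (β : ι → Type*) [∀ i, Finite (β i)] :
    Nat.card (Σ i, β i) = ∑ i, Nat.card (β i) := by
  classical
  letI : ∀ i, Fintype (β i) := fun i => Fintype.ofFinite _
  rw [Nat.card_eq_fintype_card, Fintype.card_sigma]
  exact Finset.sum_congr rfl (fun i _ => (Nat.card_eq_fintype_card).symm)

lemma card_words_eq_fSYT {m : ℕ} (p : Nat.Partition m) :
    Nat.card (Words m (partsList p)) = fSYT p := by
  have hc : (diagCells (partsList p)).card = m := by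
    rw [card_diagCells, sum_partsList]
  show Nat.card (Words m (partsList p)) = sytCount (partsList p)
  rw [sytCount_eq_card_words (partsList p) (Multiset.pairwise_sort _ _), hc]

lemma tau_card (k n : ℕ) : tauSYT k n = Nat.card (WordsBdd n k) := by
  classical
  rw [Nat.card_congr (wordsBddEquiv n k), nat_card_sigma]
  rw [tauSYT, ← Finset.sum_filter]
  have hsub : ∑ p ∈ Finset.univ.filter (fun p : Nat.Partition n => p.parts.card ≤ k), fSYT p
      = ∑ q : {p : Nat.Partition n // p.parts.card ≤ k}, fSYT q.1 :=
    Finset.sum_subtype _ (fun x => by simp) fSYT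
  rw [hsub]
  exact Finset.sum_congr rfl (fun q _ => (card_words_eq_fSYT q.1).symm)

end Counting

section Snoc

variable {n : ℕ}

lemma cnt_snoc (w : Fin n → ℕ) (a : ℕ) {j t : ℕ} (ht : t ≤ n) :
    cnt (Fin.snoc w a) j t = cnt w j t := by
  unfold cnt
  rw [Fin.univ_castSuccEmb, Finset.cons_eq_insert, Finset.filter_insert, if_neg (by simp; omega)]
  rw [Finset.filter_map, Finset.card_map]
  congr 1
  apply Finset.filter_congr
  intro x _
  simp [Fin.snoc_castSucc]

lemma cnt_snoc_top (w : Fin n → ℕ) (a j : ℕ) :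
    cnt (Fin.snoc w a) j (n + 1) = cnt w j n + if a = j then 1 else 0 := by
  unfold cnt
  rw [Fin.univ_castSuccEmb, Finset.cons_eq_insert, Finset.filter_insert]
  have hinner : ((Finset.univ : Finset (Fin n)).map Fin.castSuccEmb).filter
      (fun i : Fin (n+1) => (i : ℕ) < n + 1 ∧ (Fin.snoc w a : Fin (n+1) → ℕ) i = j)
      = ((Finset.univ : Finset (Fin n)).filter
        (fun x : Fin n => (x : ℕ) < n ∧ w x = j)).map Fin.castSuccEmb := by
    rw [Finset.filter_map]
    congr 1
    apply Finset.filter_congr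
    intro x _
    simp [Fin.snoc_castSucc, x.isLt]
  by_cases ha : a = j
  · rw [if_pos (by simpa [Fin.snoc_last] using ha), hinner]
    rw [Finset.card_insert_of_notMem]
    · rw [Finset.card_map, if_pos ha]
    · intro hmem
      rw [Finset.mem_map] at hmem
      obtain ⟨x, _, hx⟩ := hmem
      exact absurd (congrArg Fin.val hx) (by simp [Fin.castSuccEmb]; omega)
  · rw [if_neg (by simpa [Fin.snoc_last] using ha), hinner, Finset.card_map, if_neg ha]
    omega

lemma ballot_snoc_iff (w : Fin n → ℕ) (a : ℕ) :
    Ballot (Fin.snoc w a) ↔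
      Ballot w ∧ (a = 0 ∨ cnt w a n + 1 ≤ cnt w (a - 1) n) := by
  constructor
  · intro hb
    refine ⟨?_, ?_⟩
    · intro t j
      rcases le_or_gt t n with ht | ht
      · have := hb t j
        rwa [cnt_snoc w a ht, cnt_snoc w a ht] at this
      · rw [cnt_of_le w (j + 1) (le_of_lt ht), cnt_of_le w j (le_of_lt ht)]
        have := hb n j
        rwa [cnt_snoc w a le_rfl, cnt_snoc w a le_rfl] at this
    · by_cases ha : a = 0
      · exact Or.inl ha
      · right
        have hthis := hb (n + 1) (a - 1)
        rw [cnt_snoc_top, cnt_snoc_top] at hthis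
        have hsucc : a - 1 + 1 = a := by omega
        rw [hsucc, if_pos rfl, if_neg (by omega)] at hthis
        omega
  · rintro ⟨hb, hcond⟩ t j
    rcases le_or_gt t n with ht | ht
    · rw [cnt_snoc w a ht, cnt_snoc w a ht]
      exact hb t j
    · rw [cnt_of_le (Fin.snoc w a) (j + 1) (show n + 1 ≤ t by omega),
        cnt_of_le (Fin.snoc w a) j (show n + 1 ≤ t by omega),
        cnt_snoc_top, cnt_snoc_top]
      by_cases h1 : a = j + 1
      · rw [if_pos h1, if_neg (by omega)]
        rcases hcond with h0 | hc
        · omega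
        · have : a - 1 = j := by omega
          rw [this] at hc
          rw [← h1]
          omega
      · by_cases h2 : a = j
        · rw [if_neg h1, if_pos h2]
          have := hb n j
          omega
        · rw [if_neg h1, if_neg h2]
          have := hb n j
          omega

lemma ballot_init {w : Fin (n + 1) → ℕ} (hb : Ballot w) : Ballot (Fin.init w) :=
  ((ballot_snoc_iff _ _).mp (by rwa [Fin.snoc_init_self])).1

lemma cond_init {w : Fin (n + 1) → ℕ} (hb : Ballot w) :
    w (Fin.last n) = 0 ∨
      cnt (Fin.init w) (w (Fin.last n)) n + 1 ≤ cnt (Fin.init w) (w (Fin.last n) - 1) n :=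
  ((ballot_snoc_iff _ _).mp (by rwa [Fin.snoc_init_self])).2

lemma bound_init {w : Fin (n + 1) → ℕ} {k : ℕ} (hw : ∀ i, w i < k) :
    ∀ i, Fin.init w i < k := fun i => hw i.castSucc

end Snoc
section Split

variable {n k : ℕ}

/-- Valid letters that can be appended to a ballot word of shape `L`, staying below `k` rows. -/
def validFinset (k : ℕ) (L : List ℕ) : Finset ℕ :=
  (Finset.range k).filter (fun j => j = 0 ∨ L.getD j 0 < L.getD (j - 1) 0)

/-- Words of shape `L` together with a valid extra letter. -/
abbrev WordsV (n k : ℕ) (L : List ℕ) : Type :=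
  {x : (Fin n → ℕ) × ℕ //
    (Ballot x.1 ∧ ∀ j, cnt x.1 j n = L.getD j 0) ∧ x.2 ∈ validFinset k L}

/-- Bounded ballot words with a compatible extra letter. -/
abbrev WordsPair (n k : ℕ) : Type :=
  {x : (Fin n → ℕ) × ℕ //
    (Ballot x.1 ∧ ∀ i, x.1 i < k) ∧
      (x.2 < k ∧ (x.2 = 0 ∨ cnt x.1 x.2 n + 1 ≤ cnt x.1 (x.2 - 1) n))}

lemma getD_partsList_shape {w : Fin n → ℕ} (hb : Ballot w) (hw : ∀ i, w i < k) (j : ℕ) :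
    (partsList (shapePartition w hw)).getD j 0 = cnt w j n := by
  rw [partsList_shapePartition hb hw]
  exact getD_shapeList hb hw j

lemma init_snoc' (w : Fin n → ℕ) (a : ℕ) :
    Fin.init (Fin.snoc w a : Fin (n + 1) → ℕ) = w := by
  funext i
  simp [Fin.init]

lemma snoc_last' (w : Fin n → ℕ) (a : ℕ) :
    (Fin.snoc w a : Fin (n + 1) → ℕ) (Fin.last n) = a := by
  simp

/-- Splitting off the last letter. -/
def splitEquiv (n k : ℕ) : WordsBdd (n + 1) k ≃ WordsPair n k where
  toFun W := ⟨(Fin.init W.1, W.1 (Fin.last n)),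
    ⟨ballot_init W.2.1, bound_init W.2.2⟩,
    W.2.2 (Fin.last n), cond_init W.2.1⟩
  invFun x := ⟨Fin.snoc x.1.1 x.1.2, by
    obtain ⟨⟨w, a⟩, ⟨hbw, hw⟩, hak, hcond⟩ := x
    dsimp only at *
    constructor
    · exact (ballot_snoc_iff w a).mpr ⟨hbw, hcond⟩
    · intro i
      induction i using Fin.lastCases with
      | last => simpa using hak
      | cast i => rw [Fin.snoc_castSucc]; exact hw i⟩
  left_inv := by
    rintro ⟨W, hW⟩
    exact Subtype.ext (Fin.snoc_init_self W)
  right_inv := by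
    rintro ⟨⟨w, a⟩, hx⟩
    apply Subtype.ext
    dsimp only
    rw [init_snoc', snoc_last']

/-- Classifying the pair by the shape of the word part. -/
noncomputable def pairShapeEquiv (n k : ℕ) :
    WordsPair n k ≃
      Σ p : {p : Nat.Partition n // p.parts.card ≤ k}, WordsV n k (partsList p.1) where
  toFun x :=
    ⟨⟨shapePartition x.1.1 x.2.1.2, parts_card_shapePartition x.2.1.2⟩,
      ⟨x.1, ⟨x.2.1.1, fun j => (getD_partsList_shape x.2.1.1 x.2.1.2 j).symm⟩, by
        rw [validFinset, Finset.mem_filter, Finset.mem_range]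
        refine ⟨x.2.2.1, ?_⟩
        rcases x.2.2.2 with h0 | hc
        · exact Or.inl h0
        · right
          rw [getD_partsList_shape x.2.1.1 x.2.1.2, getD_partsList_shape x.2.1.1 x.2.1.2]
          omega⟩⟩
  invFun pw := ⟨pw.2.1, by
    obtain ⟨⟨p, hp⟩, ⟨⟨w, a⟩, ⟨hbw, hsh⟩, hmem⟩⟩ := pw
    rw [validFinset, Finset.mem_filter, Finset.mem_range] at hmem
    dsimp only at *
    refine ⟨⟨hbw, fun i => lt_of_lt_of_le (words_letter_lt_card ⟨w, hbw, hsh⟩ i) hp⟩,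
      hmem.1, ?_⟩
    rcases hmem.2 with h0 | hc
    · exact Or.inl h0
    · right
      have hsh' : ∀ j, cnt w j n = (partsList p).getD j 0 := hsh
      rw [hsh' a, hsh' (a - 1)]
      omega⟩
  left_inv := by
    rintro ⟨⟨w, a⟩, hx⟩
    rfl
  right_inv := by
    rintro ⟨⟨p, hp⟩, ⟨⟨w, a⟩, ⟨hbw, hsh⟩, hmem⟩⟩
    have h : ∀ hwb, shapePartition w hwb = p :=
      fun hwb => shapePartition_of_words hp w hwb hsh
    have hwb : ∀ i, w i < k :=
      fun i => lt_of_lt_of_le (words_letter_lt_card ⟨w, hbw, hsh⟩ i) hp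
    dsimp only
    refine Sigma.ext (Subtype.ext (h hwb)) ((Subtype.heq_iff_coe_eq ?_).mpr rfl)
    intro x
    dsimp only
    rw [h hwb]

/-- `WordsV` splits as a product. -/
def wordsVEquiv (n k : ℕ) (L : List ℕ) :
    WordsV n k L ≃ (Words n L × {j // j ∈ validFinset k L}) where
  toFun x := (⟨x.1.1, x.2.1⟩, ⟨x.1.2, x.2.2⟩)
  invFun y := ⟨(y.1.1, y.2.1), y.1.2, y.2.2⟩
  left_inv _ := rfl
  right_inv _ := rfl

instance finite_wordsV (n k : ℕ) (L : List ℕ) : Finite (WordsV n k L) :=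
  Finite.of_equiv _ (wordsVEquiv n k L).symm

lemma card_wordsV (n k : ℕ) (L : List ℕ) :
    Nat.card (WordsV n k L) = Nat.card (Words n L) * (validFinset k L).card := by
  rw [Nat.card_congr (wordsVEquiv n k L), Nat.card_prod]
  congr 1
  rw [Nat.card_eq_fintype_card, Fintype.card_coe]

lemma cardWordsBddSucc (n k : ℕ) :
    Nat.card (WordsBdd (n + 1) k) =
      ∑ p : Nat.Partition n,
        if p.parts.card ≤ k then fSYT p * (validFinset k (partsList p)).card else 0 := by
  classical
  rw [Nat.card_congr ((splitEquiv n k).trans (pairShapeEquiv n k)), nat_card_sigma]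
  rw [← Finset.sum_filter]
  have hsub : ∑ p ∈ Finset.univ.filter (fun p : Nat.Partition n => p.parts.card ≤ k),
      fSYT p * (validFinset k (partsList p)).card
      = ∑ q : {p : Nat.Partition n // p.parts.card ≤ k},
        fSYT q.1 * (validFinset k (partsList q.1)).card :=
    Finset.sum_subtype _ (fun x => by simp) _
  rw [hsub]
  apply Finset.sum_congr rfl
  intro q _
  rw [card_wordsV, card_words_eq_fSYT]

end Split
section Descents

/-- number of distinct values of a sorted positive list = number of descents. -/
lemma card_descents (L : List ℕ) (hs : L.Pairwise (· ≥ ·)) (hpos : ∀ x ∈ L, 0 < x) :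
    ((Finset.range L.length).filter (fun j => L.getD (j + 1) 0 < L.getD j 0)).card
      = L.toFinset.card := by
  classical
  apply Finset.card_bij (fun j _ => L.getD j 0)
  · intro j hj
    simp only [Finset.mem_filter, Finset.mem_range] at hj
    rw [List.mem_toFinset, List.getD_eq_getElem _ _ hj.1]
    exact List.getElem_mem hj.1
  · intro j1 hj1 j2 hj2 heq
    simp only [Finset.mem_filter, Finset.mem_range] at hj1 hj2
    by_contra hne
    rcases lt_or_gt_of_ne hne with hlt | hlt
    · have h1 : L.getD j2 0 ≤ L.getD (j1 + 1) 0 := getD_anti hs (by omega)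
      have h2 := hj1.2
      omega
    · have h1 : L.getD j1 0 ≤ L.getD (j2 + 1) 0 := getD_anti hs (by omega)
      have h2 := hj2.2
      omega
  · intro v hv
    rw [List.mem_toFinset] at hv
    obtain ⟨i, hi, hiv⟩ := List.mem_iff_getElem.mp hv
    set S := (Finset.range L.length).filter (fun j => L.getD j 0 = v) with hS
    have hSne : S.Nonempty := ⟨i, by
      simp only [hS, Finset.mem_filter, Finset.mem_range]
      exact ⟨hi, by rw [List.getD_eq_getElem _ _ hi]; exact hiv⟩⟩
    set j := S.max' hSne with hj
    have hjS : j ∈ S := S.max'_mem hSne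
    simp only [hS, Finset.mem_filter, Finset.mem_range] at hjS
    refine ⟨j, ?_, hjS.2⟩
    simp only [Finset.mem_filter, Finset.mem_range]
    refine ⟨hjS.1, ?_⟩
    have hvpos : 0 < v := hpos v hv
    by_cases hj1 : j + 1 < L.length
    · have hle : L.getD (j + 1) 0 ≤ L.getD j 0 := getD_anti hs (by omega)
      rcases eq_or_lt_of_le hle with heq | hlt
      · exfalso
        have : j + 1 ∈ S := by
          simp only [hS, Finset.mem_filter, Finset.mem_range]
          exact ⟨hj1, by rw [heq, hjS.2]⟩
        have := S.le_max' _ this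
        omega
      · exact hlt
    · rw [List.getD_eq_default _ _ (by omega)]
      omega

lemma toFinset_card_pos {L : List ℕ} (hL : 1 ≤ L.length) : 0 < L.toFinset.card := by
  apply Finset.card_pos.mpr
  have h0 : 0 < L.length := hL
  exact ⟨L[0], List.mem_toFinset.mpr (List.getElem_mem h0)⟩

lemma card_validFinset {k : ℕ} (L : List ℕ) (hs : L.Pairwise (· ≥ ·)) (hpos : ∀ x ∈ L, 0 < x)
    (hl1 : 1 ≤ L.length) (hlk : L.length ≤ k) :
    (validFinset k L).card = L.toFinset.card + (if L.length < k then 1 else 0) := by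
  classical
  set l := L.length with hl
  set D := (Finset.range l).filter (fun j => L.getD (j + 1) 0 < L.getD j 0) with hD
  have hvf : validFinset k L = insert 0 ((D.filter (fun j => j + 1 < k)).image (· + 1)) := by
    ext j
    simp only [validFinset, Finset.mem_filter, Finset.mem_range, Finset.mem_insert,
      Finset.mem_image, hD]
    constructor
    · rintro ⟨hjk, h0 | hlt⟩
      · exact Or.inl h0
      · right
        have hj0 : j ≠ 0 := by
          rintro rfl
          simp at hlt
        have hjl : j - 1 < l := by
          have : 0 < L.getD (j - 1) 0 := by omega
          have := lt_length_of_getD_pos this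
          omega
        refine ⟨j - 1, ⟨⟨hjl, ?_⟩, by omega⟩, by omega⟩
        have hjj : j - 1 + 1 = j := by omega
        rw [hjj]
        exact hlt
    · rintro (rfl | ⟨i, ⟨⟨hir, hid⟩, hik⟩, rfl⟩)
      · exact ⟨by omega, Or.inl rfl⟩
      · refine ⟨hik, Or.inr ?_⟩
        simpa using hid
  rw [hvf, Finset.card_insert_of_notMem (by simp),
    Finset.card_image_of_injective _ (fun a b hab => by omega)]
  by_cases hk : l < k
  · have hfil : D.filter (fun j => j + 1 < k) = D := by
      apply Finset.filter_true_of_mem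
      intro j hj
      simp only [hD, Finset.mem_filter, Finset.mem_range] at hj
      omega
    rw [hfil, hD, card_descents L hs hpos, if_pos hk]
  · have hkl : l = k := by omega
    have hDl : l - 1 ∈ D := by
      simp only [hD, Finset.mem_filter, Finset.mem_range]
      refine ⟨by omega, ?_⟩
      have h1 : l - 1 + 1 = l := by omega
      rw [h1, List.getD_eq_default _ _ (le_of_eq hl.symm)]
      rw [getD_pos_iff hpos]
      omega
    have hfil : D.filter (fun j => j + 1 < k) = D.erase (l - 1) := by
      ext j
      simp only [Finset.mem_filter, Finset.mem_erase, hD, Finset.mem_range]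
      constructor
      · rintro ⟨⟨hjr, hjd⟩, hjk⟩
        exact ⟨by omega, hjr, hjd⟩
      · rintro ⟨hne, hjr, hjd⟩
        exact ⟨⟨hjr, hjd⟩, by omega⟩
    rw [hfil, Finset.card_erase_of_mem hDl, hD, card_descents L hs hpos, if_neg hk]
    have := toFinset_card_pos hl1
    omega

lemma dPart_eq_toFinset {m : ℕ} (p : Nat.Partition m) :
    (partsList p).toFinset.card = dPart p := by
  show (partsList p).toFinset.card = p.parts.toFinset.card
  have h : ((partsList p : List ℕ) : Multiset ℕ) = p.parts := Multiset.sort_eq _ _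
  rw [← h, List.toFinset_coe]

end Descents
end SytAux

/-- For all positive integers `m` and `k`, `σ_k(m) = τ_k(m+1) - τ_{k-1}(m)`. -/
theorem stmt7 (m k : ℕ) (hm : 1 ≤ m) (hk : 1 ≤ k) :
    (sigmaSYT k m : ℤ) = (tauSYT k (m + 1) : ℤ) - (tauSYT (k - 1) m : ℤ) := by
  have hparts_len : ∀ p : Nat.Partition m, 1 ≤ (partsList p).length := by
    intro p
    rw [SytAux.length_partsList]
    by_contra hc
    have h0 : Multiset.card p.parts = 0 := by omega
    have hsum := p.parts_sum
    rw [Multiset.card_eq_zero.mp h0] at hsum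
    simp at hsum
    omega
  have key : tauSYT k (m + 1) = sigmaSYT k m + tauSYT (k - 1) m := by
    rw [SytAux.tau_card k (m + 1), SytAux.cardWordsBddSucc m k]
    have hcong : ∀ p : Nat.Partition m,
        (if p.parts.card ≤ k then fSYT p * (SytAux.validFinset k (partsList p)).card else 0)
        = (if p.parts.card ≤ k then dPart p * fSYT p else 0)
          + (if p.parts.card ≤ k - 1 then fSYT p else 0) := by
      intro p
      have hlen := SytAux.length_partsList p
      by_cases hp : p.parts.card ≤ k
      · rw [if_pos hp, if_pos hp]
        rw [SytAux.card_validFinset (partsList p) (Multiset.pairwise_sort _ _)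
          (SytAux.pos_partsList p) (hparts_len p) (by omega)]
        rw [SytAux.dPart_eq_toFinset p]
        by_cases h2 : p.parts.card ≤ k - 1
        · rw [if_pos h2, if_pos (by omega)]
          ring
        · rw [if_neg h2, if_neg (by omega)]
          ring
      · rw [if_neg hp, if_neg hp, if_neg (by omega)]
    rw [Finset.sum_congr rfl (fun p _ => hcong p), Finset.sum_add_distrib]
    rfl
  rw [key]
  push_cast
  ring
end
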